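/- arXiv:2605.26960 — 2 statements merged into one kernel-verified Lean document; each statement's English description precedes it below -/
import Mathlib

section
/- In a connected leveled graph (edges only between adjacent levels), any route produced by Polarized routing from a leaf switch s to a leaf switch t has length k ≤ 2D* - 2, where D* is the graph diameter. Formally: if a walk s = c₀, c₁, …, c_k = t satisfies that for each hop either (d(c_{i+1},s), d(c_{i+1},t)) = (d(c_i,s)+1, d(c_i,t)-1), or (d(c_i,s)+1, d(c_i,t)+1) with the constraint d(c_i,s) < d(c_i,t), or (d(c_i,s)-1, d(c_i,t)-1) with the constraint d(c_i,s) ≥ d(c_i,t), then k ≤ 2(D*-1). -/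
private lemma walk_level_parity {V : Type*} {G : SimpleGraph V} (ℓ : V → ℤ)
    (hlev : ∀ a b : V, G.Adj a b → ℓ b = ℓ a + 1 ∨ ℓ b = ℓ a - 1) :
    ∀ {u v : V} (p : G.Walk u v), (p.length : ℤ) % 2 = (ℓ v - ℓ u) % 2 := by
  intro u v p
  induction p with
  | nil => simp
  | @cons a b c h p ih =>
    have := hlev a b h
    simp only [SimpleGraph.Walk.length_cons]
    push_cast
    omega

/-- Polarized routing in a leveled (leaf-spine) graph produces routes of length
at most 2·(D* − 1), where D* is the diameter of the graph. -/
theorem polarized_route_length_bound {V : Type*} (G : SimpleGraph V) (hconn : G.Connected)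
    (ℓ : V → ℤ) (hlev : ∀ a b : V, G.Adj a b → ℓ b = ℓ a + 1 ∨ ℓ b = ℓ a - 1)
    (s t : V) (hst : ℓ s = ℓ t)
    (Dstar : ℕ) (hDub : ∀ a b : V, G.dist a b ≤ Dstar)
    (hDex : ∃ a b : V, G.dist a b = Dstar)
    (k : ℕ) (c : ℕ → V) (h0 : c 0 = s) (hk : c k = t)
    (hadj : ∀ i < k, G.Adj (c i) (c (i + 1)))
    (hhop : ∀ i < k,
      -- Forward hop: +1 from s, −1 to t
      (G.dist (c (i+1)) s = G.dist (c i) s + 1 ∧ G.dist (c i) t = G.dist (c (i+1)) t + 1) ∨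
      -- Expansion hop: +1, +1, only while d(c,s) < d(c,t)
      (G.dist (c (i+1)) s = G.dist (c i) s + 1 ∧ G.dist (c (i+1)) t = G.dist (c i) t + 1 ∧
        G.dist (c i) s < G.dist (c i) t) ∨
      -- Contraction hop: −1, −1, only once d(c,s) ≥ d(c,t)
      (G.dist (c i) s = G.dist (c (i+1)) s + 1 ∧ G.dist (c i) t = G.dist (c (i+1)) t + 1 ∧
        G.dist (c i) t ≤ G.dist (c i) s)) :
    k ≤ 2 * (Dstar - 1) := by
  -- abbreviations
  have par : ∀ v : V, ((G.dist v s : ℤ) + G.dist v t) % 2 = 0 := by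
    intro v
    obtain ⟨p, hp⟩ := hconn.exists_walk_length_eq_dist v s
    obtain ⟨q, hq⟩ := hconn.exists_walk_length_eq_dist v t
    have h1 := walk_level_parity ℓ hlev p
    have h2 := walk_level_parity ℓ hlev q
    rw [hp] at h1; rw [hq] at h2
    omega
  have hA0 : G.dist (c 0) s = 0 := by rw [h0]; simp
  have hBk : G.dist (c k) t = 0 := by rw [hk]; simp
  have hQex : ∃ i, i ≤ k ∧ G.dist (c i) t ≤ G.dist (c i) s := ⟨k, le_rfl, by omega⟩
  set m := Nat.find hQex with hmdef
  obtain ⟨hmk, hmBA⟩ : m ≤ k ∧ G.dist (c m) t ≤ G.dist (c m) s := Nat.find_spec hQex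
  have hmin : ∀ j < m, G.dist (c j) s < G.dist (c j) t := by
    intro j hj
    have := Nat.find_min hQex hj
    have hjk : j ≤ k := le_trans hj.le hmk
    omega
  -- In phase 1, A increases by exactly 1 each step
  have hAj : ∀ j ≤ m, G.dist (c j) s = j := by
    intro j hj
    induction j with
    | zero => exact hA0
    | succ n ih =>
      have hn : n < m := hj
      have hnk : n < k := lt_of_lt_of_le hn hmk
      have hAB := hmin n hn
      have ihn := ih (le_of_lt hn)
      rcases hhop n hnk with h | h | h <;> omega
  -- In phase 2, B ≤ A always
  have hBA : ∀ j, m ≤ j → j ≤ k → G.dist (c j) t ≤ G.dist (c j) s := by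
    intro j hmj
    induction j, hmj using Nat.le_induction with
    | base => intro _; exact hmBA
    | succ n hmn ih =>
      intro hnk
      have hn : n < k := hnk
      have ihn := ih hn.le
      rcases hhop n hn with h | h | h <;> omega
  -- In phase 2, B decreases by exactly 1 each step
  have hBstep : ∀ j, m ≤ j → j < k → G.dist (c j) t = G.dist (c (j+1)) t + 1 := by
    intro j hmj hjk
    have := hBA j hmj hjk.le
    rcases hhop j hjk with h | h | h <;> omega
  have hBn : ∀ n, n ≤ k - m → G.dist (c (k - n)) t = n := by
    intro n
    induction n with
    | zero => simpa using hBk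
    | succ n ih =>
      intro hn
      have h1 : m ≤ k - (n+1) := by omega
      have h2 : k - (n+1) < k := by omega
      have h3 : k - (n+1) + 1 = k - n := by omega
      have := hBstep (k - (n+1)) h1 h2
      rw [h3] at this
      have := ih (by omega)
      omega
  have hBm : G.dist (c m) t = k - m := by
    have := hBn (k - m) le_rfl
    rwa [show k - (k - m) = m by omega] at this
  have hAm : G.dist (c m) s = m := hAj m le_rfl
  rcases Nat.eq_zero_or_pos m with hm0 | hmpos
  · -- m = 0 : then dist (c 0) t = 0, so k = 0
    omega
  · -- m > 0 : examine the hop into m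
    have hj : m - 1 < m := by omega
    have hjk : m - 1 < k := lt_of_lt_of_le hj hmk
    have hABj := hmin (m - 1) hj
    have hm1 : m - 1 + 1 = m := by omega
    rcases hhop (m - 1) hjk with h | h | h
    · -- forward hop
      rw [hm1] at h
      have hub : G.dist (c (m-1)) t ≤ Dstar := hDub _ _
      have hpar := par (c m)
      -- A m ≤ B m + 1 and B m ≤ A m and parity ⇒ A m = B m
      omega
    · -- expansion hop: contradicts minimality
      rw [hm1] at h
      omega
    · -- contraction hop: contradicts A < B at m-1
      omega
end

section
/- In a Polarized route from leaf s to leaf t in a leveled graph, let m be the first vertex along the route with d(s,m) ≥ d(m,t). Then d(s,m) = d(m,t); moreover, the predecessor p of m on the route satisfies d(s,p) = d(s,m) - 1 and d(p,t) = d(m,t) + 1. -/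
private lemma walk_parity {V : Type*} {G : SimpleGraph V} (ℓ : V → ℤ)
    (hlev : ∀ a b : V, G.Adj a b → ℓ b = ℓ a + 1 ∨ ℓ b = ℓ a - 1)
    {a b : V} (p : G.Walk a b) : (p.length : ℤ) % 2 = (ℓ b - ℓ a) % 2 := by
  induction p with
  | nil => simp
  | cons h q ih =>
    rename_i u v w
    have := hlev u v h
    simp only [SimpleGraph.Walk.length_cons]
    push_cast
    omega

/-- In a Polarized route from leaf s to leaf t, the first vertex m with
d(s,m) ≥ d(m,t) satisfies d(s,m) = d(m,t); moreover its predecessor p satisfies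
d(s,p) = d(s,m) − 1 and d(p,t) = d(m,t) + 1. -/
theorem polarized_middle_switch {V : Type*} (G : SimpleGraph V) (hconn : G.Connected)
    (ℓ : V → ℤ) (hlev : ∀ a b : V, G.Adj a b → ℓ b = ℓ a + 1 ∨ ℓ b = ℓ a - 1)
    (s t : V) (hst : ℓ s = ℓ t) (hts : t ≠ s)
    (k : ℕ) (c : ℕ → V) (h0 : c 0 = s) (hk : c k = t)
    (hadj : ∀ i < k, G.Adj (c i) (c (i + 1)))
    (hhop : ∀ i < k,
      (G.dist (c (i+1)) s = G.dist (c i) s + 1 ∧ G.dist (c i) t = G.dist (c (i+1)) t + 1) ∨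
      (G.dist (c (i+1)) s = G.dist (c i) s + 1 ∧ G.dist (c (i+1)) t = G.dist (c i) t + 1 ∧
        G.dist (c i) s < G.dist (c i) t) ∨
      (G.dist (c i) s = G.dist (c (i+1)) s + 1 ∧ G.dist (c i) t = G.dist (c (i+1)) t + 1 ∧
        G.dist (c i) t ≤ G.dist (c i) s))
    -- m = c j is the first vertex on the route with d(s,m) ≥ d(m,t)
    (j : ℕ) (hj1 : 1 ≤ j) (hjk : j ≤ k)
    (hm : G.dist (c j) t ≤ G.dist (c j) s)
    (hfirst : ∀ i < j, G.dist (c i) s < G.dist (c i) t) :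
    G.dist (c j) s = G.dist (c j) t
    ∧ G.dist (c (j-1)) s + 1 = G.dist (c j) s
    ∧ G.dist (c (j-1)) t = G.dist (c j) t + 1 := by
  -- d(s,t) is even
  obtain ⟨p, hp⟩ := hconn.exists_walk_length_eq_dist s t
  have hdst : G.dist s t % 2 = 0 := by
    have := walk_parity ℓ hlev p
    rw [hp, hst] at this
    omega
  -- parity of sum along the route
  have key : ∀ i ≤ k, (G.dist (c i) s + G.dist (c i) t) % 2 = 0 := by
    intro i
    induction i with
    | zero =>
      intro _
      rw [h0, SimpleGraph.dist_self]
      have : G.dist s t = G.dist t s := SimpleGraph.dist_comm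
      omega
    | succ n ih =>
      intro hn
      have h1 := ih (by omega)
      rcases hhop n (by omega) with ⟨ha, hb⟩ | ⟨ha, hb, _⟩ | ⟨ha, hb, _⟩ <;> omega
  have hje : (G.dist (c j) s + G.dist (c j) t) % 2 = 0 := key j hjk
  have hprev := hfirst (j-1) (by omega)
  have hj' : j - 1 + 1 = j := by omega
  have hhopj := hhop (j-1) (by omega)
  rw [hj'] at hhopj
  rcases hhopj with ⟨ha, hb⟩ | ⟨ha, hb, hc⟩ | ⟨ha, hb, hc⟩ <;> omega
end
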